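/- arXiv:2111.11577 — 2 statements merged into one kernel-verified Lean document; each statement's English description precedes it below -/
import Mathlib

section
/- Let H be a linear 3-uniform hypergraph on a vertex set V containing no linear 3-cycle as a subgraph, and let ∂H be its 2-shadow: the simple graph on V in which u and v are adjacent iff {u,v} is contained in some edge of H. Then every edge of ∂H lies in exactly one triangle of ∂H. Consequently, the map H ↦ ∂H is injective on the collection of linear 3-uniform hypergraphs on V that contain no linear 3-cycle. -/
/-!
If `{u, v, w}` is a triangle of the shadow but not an edge, the three edges through `uv`, `vw`
and `wu` are distinct, and linearity forces their third vertices `x, y, z` to be distinct and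
outside `{u, v, w}`; then `{u,x,v}, {v,y,w}, {w,z,u}` is a linear 3-cycle. So in a linear
hypergraph without linear 3-cycles the triangles of the shadow are exactly the edges. Both
claims follow: the triangle through a shadow edge `uv` is the unique hyperedge through `u, v`,
and `H` is recovered from `∂H` as its set of triangles.
-/

open Filter

namespace Paper

variable {V W : Type*} [DecidableEq V] [DecidableEq W]

/-- `E` is (the edge family of) a linear 3-uniform hypergraph: every edge has 3 vertices and
two distinct edges meet in at most one vertex. -/
def Linear3 (E : Set (Finset V)) : Prop :=
  (∀ e ∈ E, e.card = 3) ∧ ∀ e ∈ E, ∀ f ∈ E, e ≠ f → (e ∩ f).card ≤ 1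

/-- A Ruzsa–Szemerédi hypergraph: a linear 3-uniform hypergraph in which every 6 vertices
span at most 2 edges. -/
def IsRS (E : Set (Finset V)) : Prop :=
  Linear3 E ∧ ∀ S : Finset V, S.card = 6 → {e ∈ E | e ⊆ S}.ncard ≤ 2

/-- `E` contains a linear 3-cycle: edges `{a,b,c}, {c,d,e}, {e,f,a}` on six distinct
vertices. -/
def HasLinear3Cycle (E : Set (Finset V)) : Prop :=
  ∃ a b c d e f : V, ({a, b, c, d, e, f} : Finset V).card = 6 ∧
    ({a, b, c} : Finset V) ∈ E ∧ ({c, d, e} : Finset V) ∈ E ∧ ({e, f, a} : Finset V) ∈ E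

/-- `E` contains a subgraph copy of the hypergraph with edge family `G`. -/
def HasCopy (G : Set (Finset W)) (E : Set (Finset V)) : Prop :=
  ∃ φ : W → V, Function.Injective φ ∧ ∀ e ∈ G, e.image φ ∈ E

/-- `E` contains an induced copy of the hypergraph with edge family `G`. -/
def HasInducedCopy (G : Set (Finset W)) (E : Set (Finset V)) : Prop :=
  ∃ φ : W → V, Function.Injective φ ∧ (∀ e ∈ G, e.image φ ∈ E) ∧
    ∀ f ∈ E, (f : Set V) ⊆ Set.range φ → ∃ e ∈ G, f = e.image φ

/-- The linear 3-cycle `𝒲³` (as a 3-uniform hypergraph on six vertices). -/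
def cycleHG : Set (Finset (Fin 6)) := {{0, 1, 2}, {2, 3, 4}, {4, 5, 0}}

/-- The Fano hypergraph `F₇`. -/
def fanoHG : Set (Finset (Fin 7)) :=
  {{0, 1, 2}, {0, 3, 4}, {0, 5, 6}, {1, 3, 5}, {1, 4, 6}, {2, 3, 6}, {2, 4, 5}}

/-- The 3-fan (sail) `F`. -/
def fanHG : Set (Finset (Fin 7)) := {{0, 1, 2}, {0, 3, 4}, {0, 5, 6}, {2, 4, 6}}

end Paper

namespace Paper

/-- The 2-shadow of a 3-uniform hypergraph: `u ~ v` iff some edge contains both. -/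
def shadow {V : Type*} (E : Set (Finset V)) : SimpleGraph V where
  Adj u v := u ≠ v ∧ ∃ e ∈ E, u ∈ e ∧ v ∈ e
  symm := by
    constructor
    rintro u v ⟨huv, e, he, hu, hv⟩
    exact ⟨huv.symm, e, he, hv, hu⟩
  loopless := by
    constructor
    rintro u ⟨hu, -⟩
    exact hu rfl

section

variable {V : Type*} [DecidableEq V]

lemma eq_triple_of_card_eq_three {e : Finset V} (he : e.card = 3) {a b c : V}
    (ha : a ∈ e) (hb : b ∈ e) (hc : c ∈ e) (hab : a ≠ b) (hac : a ≠ c) (hbc : b ≠ c) :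
    e = {a, b, c} := by
  refine (Finset.eq_of_subset_of_card_le ?_ ?_).symm
  · simp [Finset.insert_subset_iff, ha, hb, hc]
  · rw [he, Finset.card_eq_three.mpr ⟨a, b, c, hab, hac, hbc, rfl⟩]

lemma exists_third_of_card_eq_three {e : Finset V} (he : e.card = 3) {u v : V}
    (hu : u ∈ e) (hv : v ∈ e) (huv : u ≠ v) : ∃ x, x ≠ u ∧ x ≠ v ∧ e = {u, x, v} := by
  obtain ⟨x, hx, hxuv⟩ := Finset.exists_mem_notMem_of_card_lt_card
    (s := {u, v}) (by rw [he, Finset.card_pair huv]; norm_num)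
  simp only [Finset.mem_insert, Finset.mem_singleton, not_or] at hxuv
  exact ⟨x, hxuv.1, hxuv.2,
    eq_triple_of_card_eq_three he hu hx hv (Ne.symm hxuv.1) huv hxuv.2⟩

variable {H : Set (Finset V)}

lemma Linear3.eq_of_mem_of_mem (hH : Linear3 H) {e f : Finset V} (he : e ∈ H) (hf : f ∈ H)
    {u v : V} (huv : u ≠ v) (hue : u ∈ e) (hve : v ∈ e) (huf : u ∈ f) (hvf : v ∈ f) :
    e = f := by
  by_contra hne
  have hpair : ({u, v} : Finset V) ⊆ e ∩ f := by
    simp [Finset.insert_subset_iff, hue, hve, huf, hvf]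
  have := (Finset.card_le_card hpair).trans (hH.2 e he f hf hne)
  rw [Finset.card_pair huv] at this
  omega

lemma Linear3.mem_of_isNClique_three_shadow (hH : Linear3 H) (hnc : ¬ HasLinear3Cycle H)
    {t : Finset V} (ht : (shadow H).IsNClique 3 t) : t ∈ H := by
  obtain ⟨u, v, w, huv, huw, hvw, rfl⟩ := Finset.card_eq_three.mp ht.card_eq
  by_contra hmem
  obtain ⟨-, e₁, he₁, hu₁, hv₁⟩ : (shadow H).Adj u v := ht.1 (by simp) (by simp) huv
  obtain ⟨-, e₂, he₂, hv₂, hw₂⟩ : (shadow H).Adj v w := ht.1 (by simp) (by simp) hvw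
  obtain ⟨-, e₃, he₃, hw₃, hu₃⟩ : (shadow H).Adj w u := ht.1 (by simp) (by simp) huw.symm
  have hw₁ : w ∉ e₁ := fun hw =>
    hmem (eq_triple_of_card_eq_three (hH.1 e₁ he₁) hu₁ hv₁ hw huv huw hvw ▸ he₁)
  have hu₂ : u ∉ e₂ := fun hu =>
    hmem (eq_triple_of_card_eq_three (hH.1 e₂ he₂) hu hv₂ hw₂ huv huw hvw ▸ he₂)
  have hv₃ : v ∉ e₃ := fun hv =>
    hmem (eq_triple_of_card_eq_three (hH.1 e₃ he₃) hu₃ hv hw₃ huv huw hvw ▸ he₃)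
  obtain ⟨x, hxu, hxv, rfl⟩ := exists_third_of_card_eq_three (hH.1 e₁ he₁) hu₁ hv₁ huv
  obtain ⟨y, hyv, hyw, rfl⟩ := exists_third_of_card_eq_three (hH.1 e₂ he₂) hv₂ hw₂ hvw
  obtain ⟨z, hzw, hzu, rfl⟩ := exists_third_of_card_eq_three (hH.1 e₃ he₃) hw₃ hu₃ huw.symm
  have hxy : x ≠ y := by
    rintro rfl
    have hsame := hH.eq_of_mem_of_mem he₂ he₁ hxv.symm (by simp) (by simp) (by simp) (by simp)
    exact hw₁ (by simp [← hsame])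
  have hyz : y ≠ z := by
    rintro rfl
    have hsame := hH.eq_of_mem_of_mem he₃ he₂ hyw.symm (by simp) (by simp) (by simp) (by simp)
    exact hu₂ (by simp [← hsame])
  have hzx : z ≠ x := by
    rintro rfl
    have hsame := hH.eq_of_mem_of_mem he₁ he₃ hzu.symm (by simp) (by simp) (by simp) (by simp)
    exact hv₃ (by simp [← hsame])
  refine hnc ⟨u, x, v, y, w, z, ?_, he₁, he₂, he₃⟩
  repeat rw [Finset.card_insert_of_notMem (by grind)]
  rfl

lemma Linear3.isNClique_three_shadow_iff (hH : Linear3 H) (hnc : ¬ HasLinear3Cycle H)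
    (t : Finset V) : (shadow H).IsNClique 3 t ↔ t ∈ H := by
  refine ⟨hH.mem_of_isNClique_three_shadow hnc, fun ht => ⟨?_, hH.1 t ht⟩⟩
  intro a ha b hb hab
  exact ⟨hab, t, ht, ha, hb⟩

end

/-- In a linear 3-uniform hypergraph with no linear 3-cycle, every edge of the 2-shadow lies
in exactly one triangle; consequently `H ↦ ∂H` is injective on such hypergraphs. -/
theorem shadow_unique_triangle_and_injective {V : Type*} [DecidableEq V] :
    (∀ H : Set (Finset V), Linear3 H → ¬ HasLinear3Cycle H →
      ∀ u v : V, (shadow H).Adj u v →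
        ∃! t : Finset V, (shadow H).IsNClique 3 t ∧ u ∈ t ∧ v ∈ t) ∧
    (∀ H H' : Set (Finset V), Linear3 H → ¬ HasLinear3Cycle H →
      Linear3 H' → ¬ HasLinear3Cycle H' → shadow H = shadow H' → H = H') := by
  refine ⟨fun H hH hnc u v ⟨huv, e, he, hu, hv⟩ => ?_, fun H H' hH hnc hH' hnc' hsh => ?_⟩
  · have hcl := hH.isNClique_three_shadow_iff hnc
    exact ⟨e, ⟨(hcl e).2 he, hu, hv⟩, fun f ⟨hf, huf, hvf⟩ =>
      hH.eq_of_mem_of_mem ((hcl f).1 hf) he huv huf hvf hu hv⟩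
  · ext t
    rw [← hH.isNClique_three_shadow_iff hnc, hsh, hH'.isNClique_three_shadow_iff hnc']

end Paper
end

section
/- Let E be a finite linearly ordered set and let M be a rank-3 paving matroid on E. For each hyperplane H of M, let 𝒱(H) be the set of 3-element subsets T of H such that no element of H ∖ T lies strictly between two elements of T (the consecutive triples of H); list 𝒱(H) in its induced linear order as V_H⁰ < V_H¹ < ⋯, and let 𝒱⁰(M) (resp. 𝒱¹(M)) be the union over all hyperplanes H of the even-indexed (resp. odd-indexed) triples V_H^i. Then for k ∈ {0,1}, any two distinct members of 𝒱^k(M) intersect in at most one element — so 𝒱^k(M) is the set of circuit-hyperplanes of a rank-3 sparse paving matroid on E — and the map M ↦ (𝒱⁰(M), 𝒱¹(M)) is injective on the set of rank-3 paving matroids on E. -/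
open Matroid Set Filter

namespace Paper

variable {α β : Type*}

/-- Deletion of a set from a matroid. -/
def Delete (M : Matroid α) (D : Set α) : Matroid α := M ↾ (M.E \ D)

/-- Contraction of a set in a matroid, defined via duality. -/
def Contract (M : Matroid α) (C : Set α) : Matroid α := (Delete M✶ C)✶

/-- `N` is a minor of `M` if it is obtained from `M` by a contraction followed by a deletion. -/
def IsMinor (N M : Matroid α) : Prop := ∃ C D : Set α, N = Delete (Contract M C) D

/-- `M` is isomorphic to `N`. -/
def Iso (M : Matroid α) (N : Matroid β) : Prop :=
  ∃ (f : α → β) (hf : Set.InjOn f M.E), M.map f hf = N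

/-- `M` has a minor isomorphic to `N`. -/
def HasIsoMinor (M : Matroid α) (N : Matroid β) : Prop :=
  ∃ M' : Matroid α, IsMinor M' M ∧ Iso M' N

/-- A circuit is a minimal dependent set. -/
def Circuit (M : Matroid α) (C : Set α) : Prop := M.Dep C ∧ ∀ D, D ⊂ C → M.Indep D

/-- A hyperplane is a maximal proper flat. -/
def Hyperplane (M : Matroid α) (H : Set α) : Prop :=
  M.IsFlat H ∧ H ≠ M.E ∧ ∀ F, M.IsFlat F → H ⊂ F → F = M.E

/-- A matroid is sparse paving if every nonspanning circuit is a hyperplane. -/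
def SparsePaving (M : Matroid α) : Prop :=
  ∀ C, Circuit M C → ¬ M.Spanning C → Hyperplane M C

/-- `M` has rank `r`: some base has exactly `r` elements. -/
def RankEq (M : Matroid α) (r : ℕ) : Prop := ∃ B, M.IsBase B ∧ B.ncard = r

/-- `N` is (isomorphic to) the rank-3 whirl `𝒲³`: the rank-3 sparse paving matroid on six
elements whose 3-element circuits are exactly the three listed triples. -/
def IsWhirl3 (N : Matroid α) : Prop :=
  ∃ a : Fin 6 → α, Function.Injective a ∧ N.E = Set.range a ∧
    RankEq N 3 ∧ SparsePaving N ∧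
    ∀ C : Set α, (Circuit N C ∧ C.ncard = 3) ↔
      (C = {a 0, a 1, a 2} ∨ C = {a 2, a 3, a 4} ∨ C = {a 4, a 5, a 0})

/-- `N` is (isomorphic to) `M(K₄)`: the rank-3 sparse paving matroid on six elements whose
3-element circuits are exactly the four listed triples. -/
def IsMK4 (N : Matroid α) : Prop :=
  ∃ a : Fin 6 → α, Function.Injective a ∧ N.E = Set.range a ∧
    RankEq N 3 ∧ SparsePaving N ∧
    ∀ C : Set α, (Circuit N C ∧ C.ncard = 3) ↔
      (C = {a 0, a 1, a 2} ∨ C = {a 2, a 3, a 4} ∨ C = {a 4, a 5, a 0} ∨ C = {a 1, a 3, a 5})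

/-- `M` has no minor isomorphic to `𝒲³` and no minor isomorphic to `M(K₄)`. -/
def WFree (M : Matroid α) : Prop :=
  (¬ ∃ N : Matroid α, IsMinor N M ∧ IsWhirl3 N) ∧
  (¬ ∃ N : Matroid α, IsMinor N M ∧ IsMK4 N)

end Paper

namespace Paper

variable {α : Type*} [LinearOrder α]

/-- A rank-3 paving matroid: every circuit has 3 or 4 elements. -/
def Paving3 (M : Matroid α) : Prop :=
  RankEq M 3 ∧ ∀ C, Circuit M C → C.ncard = 3 ∨ C.ncard = 4

/-- `T` is a consecutive triple of `H`: a 3-element subset of `H` such that no element of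
`H \ T` lies strictly between two elements of `T`. -/
def ConsecTriple (H T : Set α) : Prop :=
  T ⊆ H ∧ T.ncard = 3 ∧ ∀ h ∈ H, h ∉ T → ∀ v ∈ T, ∀ v' ∈ T, ¬ (v < h ∧ h < v')

/-- `𝒱^k(M)` (`k ∈ {0,1}`): the union over all hyperplanes `H` of `M` of the even-indexed
(`k = 0`) resp. odd-indexed (`k = 1`) consecutive triples of `H`; the index of a consecutive
triple `T` of `H` in the induced linear order on `𝒱(H)` is the number of elements of `H`
strictly below all of `T`. -/
def Vk (M : Matroid α) (k : ℕ) : Set (Set α) :=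
  {T | ∃ H, Hyperplane M H ∧ ConsecTriple H T ∧
    {h ∈ H | ∀ t ∈ T, h < t}.ncard % 2 = k}

end Paper

/-! In a rank-3 paving matroid any two points span a unique hyperplane, so distinct
hyperplanes meet in at most one point and a 3-set is dependent exactly when it lies in a
hyperplane. Two distinct consecutive triples of one hyperplane that share two points have
indices differing by one; hence the members of `𝒱^k(M)` pairwise meet in at most one point,
and the sets of size at most 3 outside `𝒱^k(M)` are the independent sets of a rank-3 sparse
paving matroid. Conversely, successive consecutive triples of a hyperplane `H` of `M` share two
points, so if each lies in a hyperplane of `M'` they all lie in the same one, which then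
contains `H`. Thus `M` and `M'` have the same dependent triples, and a rank-3 paving matroid is
determined by these. -/

namespace Paper

section Paving

variable {α : Type*} {M M' : Matroid α} {B C F H I T X : Set α} {a b x : α}

lemma circuit_iff_isCircuit : Circuit M C ↔ M.IsCircuit C :=
  isCircuit_iff_forall_ssubset.symm

lemma Paving3.ncard_eq_of_isBase (hM : Paving3 M) (hB : M.IsBase B) : B.ncard = 3 := by
  obtain ⟨B₀, hB₀, h3⟩ := hM.1
  rw [hB.ncard_eq_ncard_of_isBase hB₀, h3]

lemma Paving3.finite_of_isBase (hM : Paving3 M) (hB : M.IsBase B) : B.Finite :=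
  finite_of_ncard_pos (by rw [hM.ncard_eq_of_isBase hB]; norm_num)

lemma Paving3.indep_of_ncard_le_two (hM : Paving3 M) (hX : X ⊆ M.E) (hXfin : X.Finite)
    (h2 : X.ncard ≤ 2) : M.Indep X := by
  by_contra hXi
  obtain ⟨C, hCX, hC⟩ := (show M.Dep X from ⟨hXi, hX⟩).exists_isCircuit_subset
  have := ncard_le_ncard hCX hXfin
  rcases hM.2 C (circuit_iff_isCircuit.2 hC) with h | h <;> omega

lemma Paving3.indep_pair (hM : Paving3 M) (ha : a ∈ M.E) (hb : b ∈ M.E) : M.Indep {a, b} :=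
  hM.indep_of_ncard_le_two (pair_subset ha hb) (toFinite _)
    ((ncard_insert_le a {b}).trans (by rw [ncard_singleton]))

lemma Paving3.isBase_of_indep (hM : Paving3 M) (hI : M.Indep I) (h3 : I.ncard = 3) :
    M.IsBase I := by
  obtain ⟨B, hB, hIB⟩ := hI.exists_isBase_superset
  rwa [eq_of_subset_of_ncard_le hIB (by rw [h3, hM.ncard_eq_of_isBase hB])
    (hM.finite_of_isBase hB)]

lemma Paving3.isFlat_eq_ground (hM : Paving3 M) (hF : M.IsFlat F) (hab : a ≠ b) (ha : a ∈ F)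
    (hb : b ∈ F) (hx : x ∈ F) (hxab : x ∉ M.closure {a, b}) : F = M.E := by
  have hpair := hM.indep_pair (hF.subset_ground ha) (hF.subset_ground hb)
  have hxab' : x ∉ ({a, b} : Set α) := fun h ↦ hxab (M.subset_closure _ hpair.subset_ground h)
  have hbase : M.IsBase {x, a, b} := by
    refine hM.isBase_of_indep ((hpair.insert_indep_iff_of_notMem hxab').2
      ⟨hF.subset_ground hx, hxab⟩) ?_
    rw [ncard_insert_of_notMem hxab', ncard_pair hab]
  refine hF.subset_ground.antisymm ?_
  rw [← hbase.closure_eq, ← hF.closure]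
  exact M.closure_subset_closure (insert_subset hx (pair_subset ha hb))

lemma Paving3.hyperplane_closure_pair (hM : Paving3 M) (hab : a ≠ b) (ha : a ∈ M.E)
    (hb : b ∈ M.E) : Hyperplane M (M.closure {a, b}) := by
  have hpair := hM.indep_pair ha hb
  have hsub := M.subset_closure _ hpair.subset_ground
  refine ⟨M.isFlat_closure _, fun hcl ↦ ?_, fun F hF hlt ↦ ?_⟩
  · have h3 := hM.ncard_eq_of_isBase (hpair.isBase_of_spanning ⟨hcl, hpair.subset_ground⟩)
    rw [ncard_pair hab] at h3
    omega
  · obtain ⟨x, hxF, hx⟩ := exists_of_ssubset hlt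
    exact hM.isFlat_eq_ground hF hab (hlt.subset (hsub (by simp)))
      (hlt.subset (hsub (by simp))) hxF hx

lemma Paving3.eq_closure_pair_of_hyperplane (hM : Paving3 M) (hH : Hyperplane M H)
    (hab : a ≠ b) (ha : a ∈ H) (hb : b ∈ H) : H = M.closure {a, b} := by
  refine subset_antisymm (fun x hx ↦ ?_) ?_
  · by_contra hxab
    exact hH.2.1 (hM.isFlat_eq_ground hH.1 hab ha hb hx hxab)
  · rw [← hH.1.closure]
    exact M.closure_subset_closure (pair_subset ha hb)

lemma Paving3.pairwise_hyperplane_inter_subsingleton (hM : Paving3 M) :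
    {H | Hyperplane M H}.Pairwise fun H H' ↦ (H ∩ H').Subsingleton := by
  intro H hH H' hH' hne a ha b hb
  by_contra hab
  exact hne <| (hM.eq_closure_pair_of_hyperplane hH hab ha.1 hb.1).trans
    (hM.eq_closure_pair_of_hyperplane hH' hab ha.2 hb.2).symm

lemma Paving3.dep_iff_exists_hyperplane (hM : Paving3 M) (h3 : T.ncard = 3) :
    M.Dep T ↔ ∃ H, Hyperplane M H ∧ T ⊆ H := by
  refine ⟨fun hT ↦ ?_, fun ⟨H, hH, hTH⟩ ↦
    ⟨fun hT ↦ hH.2.1 ?_, hTH.trans hH.1.subset_ground⟩⟩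
  · obtain ⟨a, b, c, hab, hac, hbc, rfl⟩ := ncard_eq_three.1 h3
    have hpair := hM.indep_pair (hT.subset_ground (mem_insert a _))
      (hT.subset_ground (mem_insert_of_mem a (mem_insert b _)))
    have hc : c ∈ M.closure {a, b} := by
      rw [pair_comm, insert_comm] at hT
      exact ((hpair.insert_dep_iff).1 hT).1
    refine ⟨_, hM.hyperplane_closure_pair hab (hpair.subset_ground (by simp))
      (hpair.subset_ground (by simp)), insert_subset ?_ (pair_subset ?_ hc)⟩ <;>
      exact M.subset_closure _ hpair.subset_ground (by simp)
  · refine hH.1.subset_ground.antisymm ?_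
    rw [← (hM.isBase_of_indep hT h3).closure_eq, ← hH.1.closure]
    exact M.closure_subset_closure hTH

lemma Paving3.circuit_not_spanning_iff (hM : Paving3 M) :
    Circuit M C ∧ ¬ M.Spanning C ↔ M.Dep C ∧ C.ncard = 3 := by
  constructor
  · rintro ⟨hC, hCs⟩
    refine ⟨hC.1, (hM.2 C hC).resolve_right fun h4 ↦ hCs ?_⟩
    obtain ⟨e, he⟩ := nonempty_of_ncard_ne_zero (by omega : C.ncard ≠ 0)
    have hbase := hM.isBase_of_indep (hC.2 _ (sdiff_singleton_ssubset.2 he))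
      (by rw [ncard_sdiff_singleton_of_mem he, h4])
    exact hbase.spanning.superset sdiff_subset hC.1.subset_ground
  · rintro ⟨hC, h3⟩
    have hCfin : C.Finite := finite_of_ncard_ne_zero (by omega)
    refine ⟨⟨hC, fun D hD ↦ hM.indep_of_ncard_le_two (hD.subset.trans hC.subset_ground)
      (hCfin.subset hD.subset) ?_⟩, fun hCs ↦ ?_⟩
    · have := ncard_lt_ncard hD hCfin
      omega
    · obtain ⟨H, hH, hCH⟩ := (hM.dep_iff_exists_hyperplane h3).1 hC
      refine hH.2.1 (hH.1.subset_ground.antisymm ?_)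
      rw [← hCs.closure_eq, ← hH.1.closure]
      exact M.closure_subset_closure hCH

lemma Paving3.sparsePaving_of_pairwise (hM : Paving3 M)
    (h : {T | M.Dep T ∧ T.ncard = 3}.Pairwise fun T T' ↦ (T ∩ T').ncard ≤ 1) :
    SparsePaving M := by
  intro C hC hCs
  obtain ⟨hCd, h3⟩ := hM.circuit_not_spanning_iff.1 ⟨hC, hCs⟩
  obtain ⟨H, hH, hCH⟩ := (hM.dep_iff_exists_hyperplane h3).1 hCd
  suffices H ⊆ C by rwa [hCH.antisymm this]
  intro x hxH
  by_contra hxC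
  obtain ⟨a, b, c, hab, -, -, rfl⟩ := ncard_eq_three.1 h3
  have hxab : x ∉ ({a, b} : Set α) := fun hx ↦ hxC (pair_subset_iff.2 ⟨mem_insert a _,
    mem_insert_of_mem a (mem_insert b _)⟩ hx)
  have hT : ({x, a, b} : Set α).ncard = 3 := by rw [ncard_insert_of_notMem hxab, ncard_pair hab]
  have hTd : M.Dep {x, a, b} := (hM.dep_iff_exists_hyperplane hT).2
    ⟨H, hH, insert_subset hxH (pair_subset (hCH (mem_insert a _))
      (hCH (mem_insert_of_mem a (mem_insert b _))))⟩
  have hle := h ⟨hTd, hT⟩ ⟨hCd, h3⟩ fun he ↦ hxC (he ▸ mem_insert x _)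
  have hge := ncard_le_ncard (show ({a, b} : Set α) ⊆ {x, a, b} ∩ {a, b, c} by
    intro y; simp only [mem_insert_iff, mem_singleton_iff, mem_inter_iff]; tauto) (toFinite _)
  rw [ncard_pair hab] at hge
  omega

lemma Paving3.indep_of_forall_dep_imp (hM : Paving3 M) (hM' : Paving3 M') (hE : M.E = M'.E)
    (h : ∀ T, T.ncard = 3 → M'.Dep T → M.Dep T) (hI : M.Indep I) : M'.Indep I := by
  obtain ⟨B, hB, hIB⟩ := hI.exists_isBase_superset
  have hBfin := hM.finite_of_isBase hB
  have hIE : I ⊆ M'.E := hE ▸ hI.subset_ground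
  rcases ((ncard_le_ncard hIB hBfin).trans_eq (hM.ncard_eq_of_isBase hB)).lt_or_eq with hlt | h3
  · exact hM'.indep_of_ncard_le_two hIE (hBfin.subset hIB) (by omega)
  · by_contra hI'
    exact (h I h3 ⟨hI', hIE⟩).not_indep hI

lemma Paving3.eq_of_forall_dep_iff (hM : Paving3 M) (hM' : Paving3 M') (hE : M.E = M'.E)
    (h : ∀ T, T.ncard = 3 → (M.Dep T ↔ M'.Dep T)) : M = M' :=
  ext_indep hE fun _ _ ↦ ⟨hM.indep_of_forall_dep_imp hM' hE fun T h3 ↦ (h T h3).2,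
    hM'.indep_of_forall_dep_imp hM hE.symm fun T h3 ↦ (h T h3).1⟩

end Paving

section Construction

variable {α : Type*} {E B I J T X : Set α} {V : Set (Set α)}

lemma exists_insert_notMem_of_pairwise (hVp : V.Pairwise fun T T' ↦ (T ∩ T').ncard ≤ 1)
    (hJfin : J.Finite) (hI : I.ncard = 2) (hJ : J.ncard = 3) (hJV : J ∉ V) :
    ∃ e ∈ J, e ∉ I ∧ insert e I ∉ V := by
  have hIfin : I.Finite := finite_of_ncard_ne_zero (by omega)
  by_contra! h
  by_cases hIJ : I ⊆ J
  · obtain ⟨e, heJ, heI⟩ :=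
      exists_mem_notMem_of_ncard_lt_ncard (by omega : I.ncard < J.ncard) hIfin
    have heIJ : insert e I = J := eq_of_subset_of_ncard_le (insert_subset heJ hIJ)
      (by rw [ncard_insert_of_notMem heI hIfin]; omega) hJfin
    exact hJV (heIJ ▸ h e heJ heI)
  · obtain ⟨x, hxI, hxJ⟩ := not_subset.1 hIJ
    have hJI : (J ∩ I).ncard ≤ 1 := by
      have := ncard_le_ncard (show J ∩ I ⊆ I \ {x} from
        fun y hy ↦ ⟨hy.2, by rintro rfl; exact hxJ hy.1⟩) hIfin.sdiff
      rw [ncard_sdiff_singleton_of_mem hxI] at this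
      omega
    have := ncard_inter_add_ncard_sdiff_eq_ncard J I hJfin
    obtain ⟨e, f, he, hf, hef⟩ := (one_lt_ncard_iff (s := J \ I) hJfin.sdiff).1 (by omega)
    have hne : insert e I ≠ insert f I := fun hef' ↦
      (mem_insert_iff.1 (hef' ▸ mem_insert e I)).elim hef he.2
    have hle := hVp (h e he.1 he.2) (h f hf.1 hf.2) hne
    have := ncard_le_ncard (subset_inter (subset_insert e I) (subset_insert f I))
      ((hIfin.insert e).subset inter_subset_left)
    omega

lemma indep_aug_of_pairwise (hE : E.Finite) (hV : ∀ T ∈ V, T.ncard = 3)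
    (hVp : V.Pairwise fun T T' ↦ (T ∩ T').ncard ≤ 1)
    (hIE : I ⊆ E) (hJ : J ⊆ E ∧ J.ncard ≤ 3 ∧ J ∉ V) (hlt : I.ncard < J.ncard) :
    ∃ e ∈ J, e ∉ I ∧ insert e I ⊆ E ∧ (insert e I).ncard ≤ 3 ∧ insert e I ∉ V := by
  obtain ⟨hJE, hJ3, hJV⟩ := hJ
  by_cases h1 : I.ncard ≤ 1
  · obtain ⟨e, heJ, heI⟩ := exists_mem_notMem_of_ncard_lt_ncard hlt (hE.subset hIE)
    have := ncard_insert_le e I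
    refine ⟨e, heJ, heI, insert_subset (hJE heJ) hIE, by omega, fun h ↦ ?_⟩
    have := hV _ h
    omega
  · obtain ⟨e, heJ, heI, heV⟩ :=
      exists_insert_notMem_of_pairwise (I := I) hVp (hE.subset hJE) (by omega) (by omega) hJV
    refine ⟨e, heJ, heI, insert_subset (hJE heJ) hIE, ?_, heV⟩
    rw [ncard_insert_of_notMem heI (hE.subset hIE)]
    omega

def sparsePavingOfTriples (hE : E.Finite) (V : Set (Set α)) (hV : ∀ T ∈ V, T.ncard = 3)
    (hVp : V.Pairwise fun T T' ↦ (T ∩ T').ncard ≤ 1) : Matroid α :=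
  (IndepMatroid.ofFinite hE (fun X ↦ X ⊆ E ∧ X.ncard ≤ 3 ∧ X ∉ V)
    ⟨empty_subset E, by simp, fun h ↦ by simpa using hV ∅ h⟩
    (fun I J ⟨hJE, hJ3, hJV⟩ hIJ ↦ ⟨hIJ.trans hJE,
      (ncard_le_ncard hIJ (hE.subset hJE)).trans hJ3, fun hIV ↦ hJV <|
        eq_of_subset_of_ncard_le hIJ (by rw [hV I hIV]; exact hJ3) (hE.subset hJE) ▸ hIV⟩)
    (fun _ _ hI hJ hlt ↦ indep_aug_of_pairwise hE hV hVp hI.1 hJ hlt)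
    fun _ hI ↦ hI.1).matroid

variable {hE : E.Finite} {hV : ∀ T ∈ V, T.ncard = 3}
  {hVp : V.Pairwise fun T T' ↦ (T ∩ T').ncard ≤ 1}

lemma sparsePavingOfTriples_indep_iff :
    (sparsePavingOfTriples hE V hV hVp).Indep X ↔ X ⊆ E ∧ X.ncard ≤ 3 ∧ X ∉ V :=
  Iff.rfl

lemma sparsePavingOfTriples_dep_iff (hT : T ⊆ E) (h3 : T.ncard = 3) :
    (sparsePavingOfTriples hE V hV hVp).Dep T ↔ T ∈ V := by
  rw [dep_iff, sparsePavingOfTriples_indep_iff]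
  simp only [hT, h3, le_refl, true_and, not_not]
  exact and_iff_left hT

lemma paving3_sparsePavingOfTriples (hBE : B ⊆ E) (hB3 : B.ncard = 3) (hBV : B ∉ V) :
    Paving3 (sparsePavingOfTriples hE V hV hVp) := by
  refine ⟨⟨B, (sparsePavingOfTriples_indep_iff.2 ⟨hBE, hB3.le, hBV⟩).isBase_of_maximal
    fun J hJ hBJ ↦ eq_of_subset_of_ncard_le hBJ ?_ (hE.subset hJ.1), hB3⟩, fun C hC ↦ ?_⟩
  · rw [hB3]; exact (sparsePavingOfTriples_indep_iff.1 hJ).2.1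
  have hCE : C ⊆ E := hC.1.subset_ground
  have h3 : 3 ≤ C.ncard := by
    by_contra h
    exact hC.1.not_indep (sparsePavingOfTriples_indep_iff.2 ⟨hCE, by omega, fun hCV ↦ by
      have := hV C hCV; omega⟩)
  obtain ⟨e, he⟩ := nonempty_of_ncard_ne_zero (by omega : C.ncard ≠ 0)
  have h4 := (sparsePavingOfTriples_indep_iff.1 (hC.2 _ (sdiff_singleton_ssubset.2 he))).2.1
  rw [ncard_sdiff_singleton_of_mem he] at h4
  omega

lemma exists_sparsePaving_circuits_eq (hE : E.Finite) (hV : ∀ T ∈ V, T ⊆ E ∧ T.ncard = 3)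
    (hVp : V.Pairwise fun T T' ↦ (T ∩ T').ncard ≤ 1) (hBE : B ⊆ E) (hB3 : B.ncard = 3)
    (hBV : B ∉ V) :
    ∃ N : Matroid α, N.E = E ∧ RankEq N 3 ∧ SparsePaving N ∧
      {C | Circuit N C ∧ ¬ N.Spanning C} = V := by
  let N := sparsePavingOfTriples hE V (fun T hT ↦ (hV T hT).2) hVp
  have hN : Paving3 N := paving3_sparsePavingOfTriples hBE hB3 hBV
  have hdep : {T | N.Dep T ∧ T.ncard = 3} = V := by
    ext T
    refine ⟨fun ⟨hT, h3⟩ ↦ (sparsePavingOfTriples_dep_iff hT.subset_ground h3).1 hT,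
      fun hT ↦ ⟨(sparsePavingOfTriples_dep_iff (hV T hT).1 (hV T hT).2).2 hT, (hV T hT).2⟩⟩
  refine ⟨N, rfl, hN.1, hN.sparsePaving_of_pairwise (hdep ▸ hVp), ?_⟩
  rw [← hdep]
  ext C
  exact hN.circuit_not_spanning_iff

end Construction

section ConsecutiveTriples

variable {α : Type*} [LinearOrder α] {H P T T₁ T₂ : Set α} {a h v v' w z : α}

noncomputable def consecIndex (H T : Set α) : ℕ := {h ∈ H | ∀ t ∈ T, h < t}.ncard

lemma ConsecTriple.mem_of_lt_of_lt (hT : ConsecTriple H T) (hh : h ∈ H) (hv : v ∈ T)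
    (hv' : v' ∈ T) (hvh : v < h) (hhv' : h < v') : h ∈ T := by
  by_contra hhT
  exact hT.2.2 h hh hhT v hv v' hv' ⟨hvh, hhv'⟩

lemma consecTriple_self (h3 : H.ncard = 3) : ConsecTriple H H :=
  ⟨subset_rfl, h3, fun _ hh hhH ↦ (hhH hh).elim⟩

lemma ConsecTriple.insert_of_forall_lt (hT : ConsecTriple H T) (ha : ∀ x ∈ H, x < a) :
    ConsecTriple (insert a H) T := by
  refine ⟨hT.1.trans (subset_insert a H), hT.2.1, fun h hh hhT v hv v' hv' hlt ↦ ?_⟩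
  rcases hh with rfl | hh
  · exact (hlt.2.trans (ha v' (hT.1 hv'))).false
  · exact hT.2.2 h hh hhT v hv v' hv' hlt

lemma exists_consecTriple_insert (s : Finset α) (hs : 2 ≤ s.card) (ha : ∀ x ∈ s, x < a) :
    ∃ b ∈ s, ∃ c ∈ s, b ≠ c ∧ ConsecTriple (insert a (s : Set α)) {c, b, a} := by
  have hs₀ : s.Nonempty := Finset.card_pos.1 (by omega)
  have hb := s.max'_mem hs₀
  have hs₁ : (s.erase (s.max' hs₀)).Nonempty :=
    Finset.card_pos.1 (by rw [Finset.card_erase_of_mem hb]; omega)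
  set b := s.max' hs₀
  set c := (s.erase b).max' hs₁
  have hc : c ∈ s.erase b := Finset.max'_mem _ _
  have hcb : c < b := s.lt_max'_of_mem_erase_max' hs₀ hc
  have hba := ha b hb
  refine ⟨b, hb, c, Finset.mem_of_mem_erase hc, hcb.ne', ⟨?_, ?_, ?_⟩⟩
  · exact insert_subset (mem_insert_of_mem a (Finset.mem_of_mem_erase hc))
      (insert_subset (mem_insert_of_mem a hb) (singleton_subset_iff.2 (mem_insert a _)))
  · exact ncard_eq_three.2 ⟨c, b, a, hcb.ne, (hcb.trans hba).ne, hba.ne, rfl⟩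
  · rintro h hh hhT v hv v' - ⟨hvh, -⟩
    have hcv : c ≤ v := by
      rcases hv with rfl | rfl | rfl
      exacts [le_rfl, hcb.le, (hcb.trans hba).le]
    have hhs : h ∈ s.erase b := by
      rcases hh with rfl | hh
      · exact (hhT (by simp)).elim
      · exact Finset.mem_erase.2 ⟨fun hhb ↦ hhT (by simp [hhb]), hh⟩
    have hhc : h ≠ c := fun hhc ↦ hhT (by simp [hhc])
    exact (((s.erase b).le_max' h hhs).lt_of_ne hhc).not_ge (hcv.trans hvh.le)

lemma exists_superset_of_forall_consecTriple {𝓕 : Set (Set α)}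
    (h𝓕 : 𝓕.Pairwise fun K K' ↦ (K ∩ K').Subsingleton) (hH : H.Finite) (h3 : 3 ≤ H.ncard)
    (hT : ∀ T, ConsecTriple H T → ∃ K ∈ 𝓕, T ⊆ K) : ∃ K ∈ 𝓕, H ⊆ K := by
  classical
  lift H to Finset α using hH
  rw [ncard_coe_finset] at h3
  induction H using Finset.induction_on_max with
  | empty => simp at h3
  | insert a s ha ih =>
    have has : a ∉ s := fun h ↦ (ha a h).false
    rw [Finset.card_insert_of_notMem has] at h3
    rw [Finset.coe_insert] at hT ⊢
    rcases (show 2 ≤ s.card by omega).eq_or_lt with h2 | h3s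
    · exact hT _ (consecTriple_self (by
        rw [ncard_insert_of_notMem (Finset.mem_coe.not.2 has), ncard_coe_finset, ← h2]))
    obtain ⟨K, hK, hsK⟩ := ih h3s fun T hT' ↦ hT T (hT'.insert_of_forall_lt ha)
    obtain ⟨b, hb, c, hc, hbc, hcba⟩ := exists_consecTriple_insert s h3s.le ha
    obtain ⟨K', hK', hcbaK'⟩ := hT _ hcba
    obtain rfl : K = K' := by
      by_contra hne
      exact hbc (h𝓕 hK hK' hne ⟨hsK hb, hcbaK' (by simp)⟩ ⟨hsK hc, hcbaK' (by simp)⟩)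
    exact ⟨K, hK, insert_subset (hcbaK' (by simp)) hsK⟩

lemma ConsecTriple.consecIndex_insert_eq (hH : H.Finite) (hT : ConsecTriple H (insert z P))
    (hP : P.Nonempty) (hz : ∀ p ∈ P, z < p) (hw : ∀ p ∈ P, p < w) :
    consecIndex H (insert w P) = consecIndex H (insert z P) + 1 := by
  obtain ⟨p, hp⟩ := hP
  have hbelow : {h ∈ H | ∀ t ∈ insert w P, h < t} =
      insert z {h ∈ H | ∀ t ∈ insert z P, h < t} := by
    ext h
    simp only [mem_sep_iff, mem_insert_iff, forall_eq_or_imp]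
    constructor
    · rintro ⟨hh, -, hhP⟩
      rcases lt_trichotomy h z with hhz | rfl | hzh
      · exact Or.inr ⟨hh, hhz, hhP⟩
      · exact Or.inl rfl
      · rcases hT.mem_of_lt_of_lt hh (mem_insert z P) (mem_insert_of_mem z hp) hzh (hhP p hp)
          with rfl | hhP'
        exacts [hzh.false.elim, (hhP h hhP').false.elim]
    · rintro (rfl | ⟨hh, hhz, hhP⟩)
      · exact ⟨hT.1 (mem_insert h P), (hz p hp).trans (hw p hp), hz⟩
      · exact ⟨hh, (hhP p hp).trans (hw p hp), hhP⟩
  rw [consecIndex, hbelow, ncard_insert_of_notMem (fun h ↦ (h.2 z (mem_insert z P)).false)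
    (hH.subset fun _ h ↦ h.1)]
  rfl

lemma ConsecTriple.consecIndex_mod_two_ne (hH : H.Finite) (h₁ : ConsecTriple H T₁)
    (h₂ : ConsecTriple H T₂) (hne : T₁ ≠ T₂) (hint : 1 < (T₁ ∩ T₂).ncard) :
    consecIndex H T₁ % 2 ≠ consecIndex H T₂ % 2 := by
  obtain ⟨x, y, hx, hy, hxy⟩ :=
    (one_lt_ncard_iff (hH.subset (inter_subset_left.trans h₁.1))).1 hint
  have hP : ({x, y} : Set α).ncard + 1 = 3 := by rw [ncard_pair hxy]
  obtain ⟨z, hzP, rfl⟩ :=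
    (exists_eq_insert_iff_ncard).2 ⟨pair_subset hx.1 hy.1, hP.trans h₁.2.1.symm⟩
  obtain ⟨w, hwP, rfl⟩ :=
    (exists_eq_insert_iff_ncard).2 ⟨pair_subset hx.2 hy.2, hP.trans h₂.2.1.symm⟩
  have hzw : z ≠ w := by rintro rfl; exact hne rfl
  have hz := h₂.2.2 z (h₁.1 (mem_insert z _)) (by simp_all)
  have hw := h₁.2.2 w (h₂.1 (mem_insert w _)) (by simp_all [Ne.symm hzw])
  have hsides : ((∀ p ∈ ({x, y} : Set α), z < p) ∧ ∀ p ∈ ({x, y} : Set α), p < w) ∨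
      ((∀ p ∈ ({x, y} : Set α), w < p) ∧ ∀ p ∈ ({x, y} : Set α), p < z) := by
    simp only [mem_insert_iff, mem_singleton_iff, forall_eq_or_imp, forall_eq] at *
    grind
  rcases hsides with ⟨hzP', hwP'⟩ | ⟨hwP', hzP'⟩
  · rw [h₁.consecIndex_insert_eq hH ⟨x, mem_insert x _⟩ hzP' hwP']
    omega
  · rw [h₂.consecIndex_insert_eq hH ⟨x, mem_insert x _⟩ hwP' hzP']
    omega

end ConsecutiveTriples

section Encoding

variable {α : Type*} [LinearOrder α] {M M' : Matroid α} {H T : Set α} {k : ℕ}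

lemma Paving3.dep_of_mem_Vk (hM : Paving3 M) (hT : T ∈ Vk M k) : M.Dep T := by
  obtain ⟨H, hH, hTH, -⟩ := hT
  exact (hM.dep_iff_exists_hyperplane hTH.2.1).2 ⟨H, hH, hTH.1⟩

lemma Paving3.pairwise_Vk (hM : Paving3 M) (hE : M.E.Finite) (k : ℕ) :
    (Vk M k).Pairwise fun T T' ↦ (T ∩ T').ncard ≤ 1 := by
  rintro T₁ ⟨H₁, hH₁, hT₁, hk₁⟩ T₂ ⟨H₂, hH₂, hT₂, hk₂⟩ hne
  by_cases hH : H₁ = H₂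
  · subst hH
    by_contra! hint
    exact hT₁.consecIndex_mod_two_ne (hE.subset hH₁.1.subset_ground) hT₂ hne hint
      (hk₁.trans hk₂.symm)
  · have hsub := (hM.pairwise_hyperplane_inter_subsingleton hH₁ hH₂ hH).anti
      (inter_subset_inter hT₁.1 hT₂.1)
    exact (ncard_le_one hsub.finite).2 fun _ ha _ hb ↦ hsub ha hb

lemma exists_hyperplane_of_Vk_eq (h0 : Vk M 0 = Vk M' 0) (h1 : Vk M 1 = Vk M' 1)
    (hH : Hyperplane M H) (hT : ConsecTriple H T) : ∃ H', Hyperplane M' H' ∧ T ⊆ H' := by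
  have hTV : T ∈ Vk M (consecIndex H T % 2) := ⟨H, hH, hT, rfl⟩
  obtain ⟨H', hH', hT', -⟩ : T ∈ Vk M' (consecIndex H T % 2) := by
    rcases Nat.mod_two_eq_zero_or_one (consecIndex H T) with h | h <;> rw [h] at hTV ⊢
    exacts [h0 ▸ hTV, h1 ▸ hTV]
  exact ⟨H', hH', hT'.1⟩

lemma Paving3.dep_of_forall_consecTriple (hM : Paving3 M) (hM' : Paving3 M') (hE : M.E.Finite)
    (hV : ∀ H T, Hyperplane M H → ConsecTriple H T → ∃ H', Hyperplane M' H' ∧ T ⊆ H')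
    (hT : M.Dep T) (h3 : T.ncard = 3) : M'.Dep T := by
  obtain ⟨H, hH, hTH⟩ := (hM.dep_iff_exists_hyperplane h3).1 hT
  have hHfin := hE.subset hH.1.subset_ground
  obtain ⟨K, hK, hHK⟩ := exists_superset_of_forall_consecTriple
    hM'.pairwise_hyperplane_inter_subsingleton hHfin (h3 ▸ ncard_le_ncard hTH hHfin)
    fun T' hT' ↦ hV H T' hH hT'
  exact (hM'.dep_iff_exists_hyperplane h3).2 ⟨K, hK, hTH.trans hHK⟩

end Encoding

/-- **Pendavingh–Van der Pol encoding.** For a rank-3 paving matroid `M` on a finite linearly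
ordered ground set `E`: for `k ∈ {0,1}` the members of `𝒱^k(M)` pairwise intersect in at most
one element, so `𝒱^k(M)` is the family of circuit-hyperplanes (nonspanning circuits) of a
rank-3 sparse paving matroid on `E`; and the map `M ↦ (𝒱⁰(M), 𝒱¹(M))` is injective on rank-3
paving matroids on `E`. -/
theorem paving_encoding {α : Type*} [LinearOrder α] (E : Set α) (hE : E.Finite) :
    (∀ M : Matroid α, M.E = E → Paving3 M → ∀ k ∈ ({0, 1} : Set ℕ),
      (∀ T₁ ∈ Vk M k, ∀ T₂ ∈ Vk M k, T₁ ≠ T₂ → (T₁ ∩ T₂).ncard ≤ 1) ∧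
      ∃ N : Matroid α, N.E = E ∧ RankEq N 3 ∧ SparsePaving N ∧
        {C : Set α | Circuit N C ∧ ¬ N.Spanning C} = Vk M k) ∧
    (∀ M M' : Matroid α, M.E = E → M'.E = E → Paving3 M → Paving3 M' →
      Vk M 0 = Vk M' 0 → Vk M 1 = Vk M' 1 → M = M') := by
  refine ⟨fun M hME hM k _ ↦ ?_, fun M M' hME hM'E hM hM' h0 h1 ↦ ?_⟩
  · have hpair := hM.pairwise_Vk (hME ▸ hE) k
    have hV : ∀ T ∈ Vk M k, T ⊆ E ∧ T.ncard = 3 := by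
      rintro T ⟨H, hH, hTH, -⟩
      exact ⟨hTH.1.trans (hME ▸ hH.1.subset_ground), hTH.2.1⟩
    obtain ⟨B, hB, hB3⟩ := hM.1
    exact ⟨hpair, exists_sparsePaving_circuits_eq hE hV hpair (hME ▸ hB.subset_ground) hB3
      fun hBV ↦ (hM.dep_of_mem_Vk hBV).not_indep hB.indep⟩
  · refine hM.eq_of_forall_dep_iff hM' (hME.trans hM'E.symm) fun T h3 ↦
      ⟨fun hT ↦ ?_, fun hT ↦ ?_⟩
    · exact hM.dep_of_forall_consecTriple hM' (hME ▸ hE)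
        (fun _ _ ↦ exists_hyperplane_of_Vk_eq h0 h1) hT h3
    · exact hM'.dep_of_forall_consecTriple hM (hM'E ▸ hE)
        (fun _ _ ↦ exists_hyperplane_of_Vk_eq h0.symm h1.symm) hT h3

end Paper
end
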